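/- arXiv:1507.05690 — 6 statements merged into one kernel-verified Lean document; each statement's English description precedes it below -/
import Mathlib

section
/- Let n be an even integer with n ≥ 2 and set k = n/2. Let y be an even integer with n/2 ≤ y ≤ n. Then the probability that a lazy step selects between y − n/2 and y/2 (inclusive) of the y mismatched coordinates is at least 1/4; that is, ∑_{i : y − n/2 ≤ i ≤ y/2} binom(y,i)·binom(n−y, n/2 − i) / (2·binom(n, n/2)) ≥ 1/4. -/
open Finset

/-- `pcoup n k y i` is the probability that a lazy step of the coupling is active and selects
exactly `i` of the `y` mismatched coordinates among the `k` coordinates picked: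
`binom(y,i)·binom(n−y,k−i) / (2·binom(n,k))`. -/
noncomputable def pcoup (n k y : ℕ) (i : ℕ) : ℝ :=
  ((y.choose i * (n - y).choose (k - i) : ℕ) : ℝ) / (2 * n.choose k)

lemma vand (y m k : ℕ) :
    ∑ i ∈ Finset.range (k + 1), y.choose i * m.choose (k - i) = (y + m).choose k := by
  rw [Nat.add_choose_eq, Finset.Nat.sum_antidiagonal_eq_sum_range_succ
    (fun a b => y.choose a * m.choose b)]

/-- Lemma `prob ineq`, part 1: for `k = n/2` and even `y` with `n/2 ≤ y ≤ n`, the probability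
of selecting between `y − n/2` and `y/2` mismatched coordinates is at least `1/4`. -/
theorem stmt_3 (n y : ℕ) (hn : 2 ≤ n) (hne : Even n) (hye : Even y)
    (hy1 : n / 2 ≤ y) (hy2 : y ≤ n) :
    (1 : ℝ) / 4 ≤ ∑ i ∈ Finset.Icc (y - n / 2) (y / 2), pcoup n (n / 2) y i := by
  obtain ⟨t, ht⟩ := hne
  obtain ⟨s, hs⟩ := hye
  have hk : n / 2 = t := by omega
  have hs' : y / 2 = s := by omega
  rw [hk, hs'] at *
  set g : ℕ → ℝ := fun i => ((y.choose i * (n - y).choose (t - i) : ℕ) : ℝ) with hg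
  have hgpos : ∀ i, 0 ≤ g i := fun i => Nat.cast_nonneg _
  have hCpos : (0 : ℝ) < n.choose t := by
    exact_mod_cast Nat.choose_pos (show t ≤ n by omega)
  have htot : ∑ i ∈ Finset.Icc (y - t) t, g i = (n.choose t : ℝ) := by
    have h1 : ∑ i ∈ Finset.range (t + 1), y.choose i * (n - y).choose (t - i)
        = n.choose t := by
      have := vand y (n - y) t
      rwa [show y + (n - y) = n by omega] at this
    have h2 : ∑ i ∈ Finset.Icc (y - t) t, g i = ∑ i ∈ Finset.range (t + 1), g i := by
      apply Finset.sum_subset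
      · intro i hi
        simp only [Finset.mem_Icc] at hi
        simp only [Finset.mem_range]
        omega
      · intro i hi hni
        simp only [Finset.mem_range] at hi
        simp only [Finset.mem_Icc, not_and, not_le] at hni
        have hlt : n - y < t - i := by omega
        simp [hg, Nat.choose_eq_zero_of_lt hlt]
    rw [h2, ← h1]
    push_cast
    simp [hg]
  have hsym : ∀ i ∈ Finset.Icc s t, g (y - i) = g i := by
    intro i hi
    simp only [Finset.mem_Icc] at hi
    have h1 : y.choose (y - i) = y.choose i := Nat.choose_symm (by omega)
    have h2 : (n - y).choose (t - (y - i)) = (n - y).choose (t - i) := by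
      rw [show t - (y - i) = (n - y) - (t - i) by omega,
        Nat.choose_symm (by omega : t - i ≤ n - y)]
    simp [hg, h1, h2]
  have hrefl : ∑ i ∈ Finset.Icc s t, g i = ∑ i ∈ Finset.Icc (y - t) s, g i := by
    refine Finset.sum_nbij' (fun i => y - i) (fun i => y - i) ?_ ?_ ?_ ?_ ?_
    · intro a ha
      simp only [Finset.mem_Icc] at ha ⊢
      omega
    · intro a ha
      simp only [Finset.mem_Icc] at ha ⊢
      omega
    · intro a ha
      simp only [Finset.mem_Icc] at ha
      show y - (y - a) = a
      omega
    · intro a ha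
      simp only [Finset.mem_Icc] at ha
      show y - (y - a) = a
      omega
    · intro a ha
      exact (hsym a ha).symm
  have hsplit : (n.choose t : ℝ) ≤ 2 * ∑ i ∈ Finset.Icc (y - t) s, g i := by
    have hun : Finset.Icc (y - t) t = Finset.Icc (y - t) s ∪ Finset.Icc (s + 1) t := by
      ext i
      simp only [Finset.mem_Icc, Finset.mem_union]
      omega
    have hdisj : Disjoint (Finset.Icc (y - t) s) (Finset.Icc (s + 1) t) := by
      rw [Finset.disjoint_left]
      intro a ha hb
      simp only [Finset.mem_Icc] at ha hb
      omega
    have hsub : ∑ i ∈ Finset.Icc (s + 1) t, g i ≤ ∑ i ∈ Finset.Icc s t, g i := by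
      apply Finset.sum_le_sum_of_subset_of_nonneg
      · intro i hi
        simp only [Finset.mem_Icc] at hi ⊢
        omega
      · intro i _ _
        exact hgpos i
    calc (n.choose t : ℝ) = ∑ i ∈ Finset.Icc (y - t) t, g i := htot.symm
      _ = ∑ i ∈ Finset.Icc (y - t) s, g i + ∑ i ∈ Finset.Icc (s + 1) t, g i := by
          rw [hun, Finset.sum_union hdisj]
      _ ≤ ∑ i ∈ Finset.Icc (y - t) s, g i + ∑ i ∈ Finset.Icc s t, g i := by linarith
      _ = 2 * ∑ i ∈ Finset.Icc (y - t) s, g i := by rw [hrefl]; ring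
  have hsum : ∑ i ∈ Finset.Icc (y - t) s, pcoup n t y i
      = (∑ i ∈ Finset.Icc (y - t) s, g i) / (2 * n.choose t) := by
    rw [Finset.sum_div]
    rfl
  rw [hsum, le_div_iff₀ (by positivity)]
  linarith
end

section
/- Let n be an even integer with n ≥ 2 and set k = n/2. Let y be an even integer with 2 ≤ y ≤ n/2. Then the probability that a lazy step selects between y/4 and y/2 (inclusive) of the y mismatched coordinates is at least 1/4; that is, ∑_{i : y/4 ≤ i ≤ y/2} binom(y,i)·binom(n−y, n/2 − i) / (2·binom(n, n/2)) ≥ 1/4. -/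
/-!
Write `n = 2(m + j)` and `y = 2m`. The terms `a i = C(2m, i) C(2j, m + j - i)` sum to `C(n, n/2)`
by Vandermonde and are symmetric about `i = m`, so the total is `2 ∑_{i<m} a i + a m`, and the
claim reduces to `2 ∑_{i < ⌈m/2⌉} a i ≤ a m`. Bounding the second factor by its central value
`C(2j, j)`, this follows from `2 ∑_{i < ⌈m/2⌉} C(2m, i) ≤ C(2m, m)`: below a third of the row the
binomial coefficients at least double at each step, so that tail is at most twice its last term,
which is at most a quarter of `C(2m, m)`.
-/

open Finset

namespace Nat

theorem two_mul_choose_le_choose_succ {n i : ℕ} (h : 3 * i + 2 ≤ n) :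
    2 * n.choose i ≤ n.choose (i + 1) := by
  refine Nat.le_of_mul_le_mul_right ?_ (Nat.succ_pos i)
  calc 2 * n.choose i * (i + 1) = n.choose i * (2 * (i + 1)) := by ring
    _ ≤ n.choose i * (n - i) := Nat.mul_le_mul_left _ (by omega)
    _ = n.choose (i + 1) * (i + 1) := (choose_succ_right_eq n i).symm

theorem four_mul_choose_le_choose_add_two {n i : ℕ} (h : 3 * i + 4 ≤ n) :
    4 * n.choose i ≤ n.choose (i + 2) := by
  refine Nat.le_of_mul_le_mul_right (c := (i + 1) * (i + 2)) ?_ (by positivity)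
  calc 4 * n.choose i * ((i + 1) * (i + 2)) = n.choose i * (2 * (i + 2) * (2 * (i + 1))) := by
        ring
    _ ≤ n.choose i * ((n - i) * (n - (i + 1))) :=
        Nat.mul_le_mul_left _ (Nat.mul_le_mul (by omega) (by omega))
    _ = n.choose (i + 1) * (i + 1) * (n - (i + 1)) := by rw [choose_succ_right_eq]; ring
    _ = n.choose (i + 2) * ((i + 1) * (i + 2)) := by
        rw [mul_right_comm, ← choose_succ_right_eq]; ring

theorem sum_range_succ_choose_le_two_mul_choose {n d : ℕ} (h : 3 * d ≤ n + 1) :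
    ∑ i ∈ range (d + 1), n.choose i ≤ 2 * n.choose d := by
  induction d with
  | zero => simp
  | succ d ih =>
    rw [sum_range_succ]
    have hdouble := two_mul_choose_le_choose_succ (n := n) (i := d) (by omega)
    have hprefix := ih (by omega)
    omega

theorem two_mul_sum_range_choose_le_centralBinom (m : ℕ) :
    2 * ∑ i ∈ range ((m + 1) / 2), (2 * m).choose i ≤ m.centralBinom := by
  rcases le_or_gt m 3 with hm | hm
  · interval_cases m <;> decide
  · obtain ⟨e, he⟩ : ∃ e, (m + 1) / 2 = e + 1 := ⟨(m + 1) / 2 - 1, by omega⟩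
    rw [he]
    have hgeo := sum_range_succ_choose_le_two_mul_choose (n := 2 * m) (d := e) (by omega)
    have hstep := four_mul_choose_le_choose_add_two (n := 2 * m) (i := e) (by omega)
    have hcentral := choose_le_centralBinom (e + 2) m
    omega

theorem sum_range_choose_mul_choose_sub {a k : ℕ} (b : ℕ) (h : a ≤ k) :
    ∑ i ∈ range (a + 1), a.choose i * b.choose (k - i) = (a + b).choose k := by
  rw [add_choose_eq,
    Finset.Nat.sum_antidiagonal_eq_sum_range_succ (fun i l => a.choose i * b.choose l)]
  refine sum_subset (range_subset_range.mpr (by omega)) fun i _ hi => ?_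
  rw [choose_eq_zero_of_lt (by simpa using hi), zero_mul]

theorem ceil_natCast_div_natCast {K : Type*} [Semifield K] [LinearOrder K] [IsStrictOrderedRing K]
    [FloorSemiring K] (a : ℕ) {b : ℕ} (hb : 0 < b) : ⌈(a : K) / b⌉₊ = a ⌈/⌉ b := by
  refine eq_of_forall_ge_iff fun c => ?_
  rw [Nat.ceil_le, div_le_iff₀ (by exact_mod_cast hb), ceilDiv_le_iff_le_smul hb, smul_eq_mul,
    mul_comm]
  exact_mod_cast Iff.rfl

end Nat

theorem sum_range_two_mul_add_one_of_symm {M : Type*} [AddCommMonoid M] (f : ℕ → M) (m : ℕ)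
    (hf : ∀ i ≤ 2 * m, f (2 * m - i) = f i) :
    ∑ i ∈ range (2 * m + 1), f i = ∑ i ∈ range m, f i + f m + ∑ i ∈ range m, f i := by
  rw [show 2 * m + 1 = m + 1 + m by omega, sum_range_add, sum_range_succ,
    ← sum_range_reflect (fun i => f (m + 1 + i))]
  congr 1
  refine sum_congr rfl fun i hi => ?_
  rw [mem_range] at hi
  rw [← hf i (by omega)]
  congr 1
  omega

theorem sum_range_le_two_mul_sum_Icc_of_symm (f : ℕ → ℕ) {m c : ℕ}
    (hf : ∀ i ≤ 2 * m, f (2 * m - i) = f i) (hc : c ≤ m)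
    (htail : 2 * ∑ i ∈ range c, f i ≤ f m) :
    ∑ i ∈ range (2 * m + 1), f i ≤ 2 * ∑ i ∈ Icc c m, f i := by
  have hsplit : ∑ i ∈ range m, f i + f m = ∑ i ∈ range c, f i + ∑ i ∈ Icc c m, f i := by
    rw [← sum_range_succ, ← Ico_add_one_right_eq_Icc, sum_range_add_sum_Ico _ (by omega)]
  rw [sum_range_two_mul_add_one_of_symm f m hf]
  omega

/-- The numerator of `pcoup n k y i` for `n = 2(m + j)`, `k = m + j`, `y = 2m`. -/
def symmHypergeomTerm (m j i : ℕ) : ℕ := (2 * m).choose i * (2 * j).choose (m + j - i)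

theorem symmHypergeomTerm_symm {m j i : ℕ} (hmj : m ≤ j) (hi : i ≤ 2 * m) :
    symmHypergeomTerm m j (2 * m - i) = symmHypergeomTerm m j i := by
  unfold symmHypergeomTerm
  rw [Nat.choose_symm hi, Nat.choose_symm_of_eq_add (n := 2 * j) (b := m + j - i) (by omega)]

theorem two_mul_sum_range_symmHypergeomTerm_le (m j : ℕ) :
    2 * ∑ i ∈ range ((m + 1) / 2), symmHypergeomTerm m j i ≤ symmHypergeomTerm m j m := by
  have hrow : ∀ i, (2 * j).choose (m + j - i) ≤ j.centralBinom := fun i =>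
    Nat.choose_le_centralBinom _ j
  calc 2 * ∑ i ∈ range ((m + 1) / 2), symmHypergeomTerm m j i
      ≤ 2 * ∑ i ∈ range ((m + 1) / 2), (2 * m).choose i * j.centralBinom :=
        Nat.mul_le_mul_left _ (sum_le_sum fun i _ => Nat.mul_le_mul_left _ (hrow i))
    _ = (2 * ∑ i ∈ range ((m + 1) / 2), (2 * m).choose i) * j.centralBinom := by
        rw [← sum_mul, mul_assoc]
    _ ≤ m.centralBinom * j.centralBinom :=
        Nat.mul_le_mul_right _ (Nat.two_mul_sum_range_choose_le_centralBinom m)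
    _ = symmHypergeomTerm m j m := by
        rw [symmHypergeomTerm, Nat.centralBinom_eq_two_mul_choose,
          Nat.centralBinom_eq_two_mul_choose, Nat.add_sub_cancel_left]

theorem centralBinom_le_two_mul_sum_Icc_symmHypergeomTerm {m j : ℕ} (hmj : m ≤ j) :
    (m + j).centralBinom ≤ 2 * ∑ i ∈ Icc ((m + 1) / 2) m, symmHypergeomTerm m j i := by
  have hvandermonde :
      ∑ i ∈ range (2 * m + 1), symmHypergeomTerm m j i = (m + j).centralBinom := by
    rw [Nat.centralBinom_eq_two_mul_choose, mul_add]
    exact Nat.sum_range_choose_mul_choose_sub _ (by omega)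
  rw [← hvandermonde]
  exact sum_range_le_two_mul_sum_Icc_of_symm _ (fun i hi => symmHypergeomTerm_symm hmj hi)
    (by omega) (two_mul_sum_range_symmHypergeomTerm_le m j)

theorem sum_pcoup_eq (n k y : ℕ) (s : Finset ℕ) :
    ∑ i ∈ s, pcoup n k y i =
      ((∑ i ∈ s, y.choose i * (n - y).choose (k - i) : ℕ) : ℝ) / (2 * n.choose k) := by
  rw [Nat.cast_sum, sum_div]
  rfl

theorem stmt_4_general (n y : ℕ) (hne : Even n) (hye : Even y)
    (hy2 : y ≤ n / 2) :
    (1 : ℝ) / 4 ≤ ∑ i ∈ Finset.Icc ⌈(y : ℚ) / 4⌉₊ (y / 2), pcoup n (n / 2) y i := by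
  obtain ⟨m, rfl⟩ := hye
  obtain ⟨j, rfl, hmj⟩ : ∃ j, n = 2 * (m + j) ∧ m ≤ j := by
    obtain ⟨k, rfl⟩ := hne
    exact ⟨k - m, by omega, by omega⟩
  have hceil : ⌈((m + m : ℕ) : ℚ) / 4⌉₊ = (m + 1) / 2 := by
    rw [show (4 : ℚ) = (4 : ℕ) by norm_num, Nat.ceil_natCast_div_natCast _ (by norm_num),
      Nat.ceilDiv_eq_add_pred_div]
    omega
  rw [hceil, show (m + m) / 2 = m by omega, show 2 * (m + j) / 2 = m + j by omega,
    sum_pcoup_eq, show 2 * (m + j) - (m + m) = 2 * j by omega, ← two_mul,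
    ← Nat.centralBinom_eq_two_mul_choose,
    le_div_iff₀ (mul_pos two_pos (by exact_mod_cast (m + j).centralBinom_pos))]
  change _ ≤ ((∑ i ∈ Icc ((m + 1) / 2) m, symmHypergeomTerm m j i : ℕ) : ℝ)
  have hmain : ((m + j).centralBinom : ℝ) ≤
      2 * ((∑ i ∈ Icc ((m + 1) / 2) m, symmHypergeomTerm m j i : ℕ) : ℝ) := by
    exact_mod_cast centralBinom_le_two_mul_sum_Icc_symmHypergeomTerm hmj
  linarith

/-- Lemma `prob ineq`, part 2: for `k = n/2` and even `y` with `2 ≤ y ≤ n/2`, the probability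
of selecting between `y/4` and `y/2` mismatched coordinates is at least `1/4`. -/
theorem stmt_4 (n y : ℕ) (hn : 2 ≤ n) (hne : Even n) (hye : Even y)
    (hy1 : 2 ≤ y) (hy2 : y ≤ n / 2) :
    (1 : ℝ) / 4 ≤ ∑ i ∈ Finset.Icc ⌈(y : ℚ) / 4⌉₊ (y / 2), pcoup n (n / 2) y i :=
  stmt_4_general n y hne hye hy2
end

section
/- Let n, k, y be integers with 1 ≤ k ≤ n, y even, 2 ≤ y, k ≤ y ≤ n, and (log 2)/2 ≤ yk/n < 1 (log denoting natural logarithm). Then the probability that a lazy step selects between 1 and min{y/2, k} (inclusive) of the y mismatched coordinates is at least (√2 − 1)/(4·√2); that is, ∑_{i : 1 ≤ i ≤ min(y/2, k)} binom(y,i)·binom(n−y, k−i) / (2·binom(n,k)) ≥ (√2 − 1)/(4·√2). -/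
/-!
Write `y = 2t` and `f i = C(2t, i) C(n-2t, k-i)`, so that `∑ f = C(n, k)` by Vandermonde.
The term `f 0 = C(n-2t, k)` is at most `C(n, k) (1 - y/n)^k ≤ C(n, k) e^{-yk/n} ≤ C(n, k)/√2`.
Since `yk < n`, both binomial factors increase up to the relevant midpoints, and the reflection
`i ↦ 2t + 1 - i` shows that the terms with `i > t` sum to at most those with `1 ≤ i ≤ t`.
Hence `C(n, k) ≤ C(n, k)/√2 + 2 ∑_{1 ≤ i ≤ min(t, k)} f i`.
-/

open Finset

namespace Nat

theorem choose_le_choose_of_le_of_two_mul_le {m a b : ℕ} (hab : a ≤ b) (hb : 2 * b ≤ m + 1) :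
    m.choose a ≤ m.choose b := by
  induction b, hab using Nat.le_induction with
  | base => rfl
  | succ b _ ih =>
    refine (ih (by omega)).trans ?_
    rcases lt_or_ge b (m / 2) with h | h
    · exact choose_le_succ_of_lt_half_left h
    · obtain rfl : m = 2 * b + 1 := by omega
      exact (choose_symm_half b).ge

theorem descFactorial_mul_pow_le {m n : ℕ} (hmn : m ≤ n) (k : ℕ) :
    m.descFactorial k * n ^ k ≤ n.descFactorial k * m ^ k := by
  induction k with
  | zero => simp
  | succ k ih =>
    have step : (m - k) * n ≤ (n - k) * m := by
      rw [Nat.sub_mul, Nat.sub_mul, mul_comm m n]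
      exact Nat.sub_le_sub_left (Nat.mul_le_mul_left k hmn) _
    calc m.descFactorial (k + 1) * n ^ (k + 1)
        = ((m - k) * n) * (m.descFactorial k * n ^ k) := by rw [descFactorial_succ, pow_succ]; ring
      _ ≤ ((n - k) * m) * (n.descFactorial k * m ^ k) := Nat.mul_le_mul step ih
      _ = n.descFactorial (k + 1) * m ^ (k + 1) := by rw [descFactorial_succ, pow_succ]; ring

theorem choose_mul_pow_le {m n : ℕ} (hmn : m ≤ n) (k : ℕ) :
    m.choose k * n ^ k ≤ n.choose k * m ^ k := by
  have h := descFactorial_mul_pow_le hmn k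
  rw [descFactorial_eq_factorial_mul_choose, descFactorial_eq_factorial_mul_choose,
    Nat.mul_assoc, Nat.mul_assoc] at h
  exact Nat.le_of_mul_le_mul_left h (factorial_pos k)

theorem add_choose_eq_sum_range (m n k : ℕ) :
    (m + n).choose k = ∑ i ∈ range (k + 1), m.choose i * n.choose (k - i) := by
  rw [add_choose_eq, Finset.Nat.sum_antidiagonal_eq_sum_range_succ
    (fun i j => m.choose i * n.choose j)]

end Nat

theorem choose_sub_le_choose_mul_one_sub_pow {n y : ℕ} (hyn : y ≤ n) (k : ℕ) :
    ((n - y).choose k : ℝ) ≤ n.choose k * (1 - y / n) ^ k := by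
  rcases (Nat.zero_le n).eq_or_lt with rfl | hn
  · simp [Nat.le_zero.mp hyn]
  have hnR : (0 : ℝ) < n := Nat.cast_pos.mpr hn
  have h : ((n - y).choose k * n ^ k : ℝ) ≤ n.choose k * (n - y : ℕ) ^ k := by
    exact_mod_cast Nat.choose_mul_pow_le (Nat.sub_le n y) k
  rw [Nat.cast_sub hyn] at h
  rw [one_sub_div hnR.ne', div_pow, ← mul_div_assoc, le_div_iff₀ (by positivity)]
  exact h

theorem choose_sub_le_choose_mul_exp {n y : ℕ} (hyn : y ≤ n) (k : ℕ) :
    ((n - y).choose k : ℝ) ≤ n.choose k * Real.exp (-(y * k / n)) := by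
  have hx : (0 : ℝ) ≤ 1 - y / n := by
    rw [sub_nonneg]; exact div_le_one_of_le₀ (by exact_mod_cast hyn) (Nat.cast_nonneg n)
  calc ((n - y).choose k : ℝ) ≤ n.choose k * (1 - y / n) ^ k :=
        choose_sub_le_choose_mul_one_sub_pow hyn k
    _ ≤ n.choose k * Real.exp (-(y / n)) ^ k := by
        gcongr
        linarith [Real.add_one_le_exp (-(y / n : ℝ))]
    _ = n.choose k * Real.exp (-(y * k / n)) := by
        rw [← Real.exp_nat_mul]; ring_nf

theorem choose_sub_mul_sqrt_two_le {n y k : ℕ} (hyn : y ≤ n)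
    (h : Real.log 2 / 2 ≤ (y : ℝ) * k / n) :
    ((n - y).choose k : ℝ) * Real.sqrt 2 ≤ n.choose k := by
  rw [← le_div_iff₀ (by positivity)]
  calc ((n - y).choose k : ℝ) ≤ n.choose k * Real.exp (-(y * k / n)) :=
        choose_sub_le_choose_mul_exp hyn k
    _ ≤ n.choose k * Real.exp (-(Real.log 2 / 2)) := by gcongr
    _ = n.choose k / Real.sqrt 2 := by
        rw [Real.exp_neg, Real.exp_half, Real.exp_log two_pos, div_eq_mul_inv]

theorem sum_Icc_succ_le_sum_Icc_one_choose_two_mul_mul_choose (t a k : ℕ) (hk : k ≤ 2 * t)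
    (ha : 2 * (k - 1) ≤ a + 1) :
    ∑ i ∈ Icc (t + 1) k, (2 * t).choose i * a.choose (k - i) ≤
      ∑ i ∈ Icc 1 t, (2 * t).choose i * a.choose (k - i) := by
  set f : ℕ → ℕ := fun i => (2 * t).choose i * a.choose (k - i)
  have reflect_le : ∀ i ∈ Icc (t + 1) k, f i ≤ f (2 * t + 1 - i) := by
    intro i hi
    rw [mem_Icc] at hi
    refine Nat.mul_le_mul ?_ (Nat.choose_le_choose_of_le_of_two_mul_le (by omega) (by omega))
    rw [← Nat.choose_symm (by omega : i ≤ 2 * t)]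
    exact Nat.choose_le_choose_of_le_of_two_mul_le (by omega) (by omega)
  calc ∑ i ∈ Icc (t + 1) k, f i ≤ ∑ i ∈ Icc (t + 1) k, f (2 * t + 1 - i) := sum_le_sum reflect_le
    _ = ∑ j ∈ (Icc (t + 1) k).image (2 * t + 1 - ·), f j := by
        rw [sum_image]
        intro i hi j hj hij
        simp only [coe_Icc, Set.mem_Icc] at hi hj hij
        omega
    _ ≤ ∑ i ∈ Icc 1 t, f i := by
        refine sum_le_sum_of_subset fun j hj => ?_
        simp only [mem_image, mem_Icc] at hj ⊢
        omega

theorem choose_le_choose_sub_add_two_mul_sum_Icc {n t k : ℕ} (hn : 2 * t ≤ n) (hk : k ≤ 2 * t)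
    (hkn : 2 * (k - 1) ≤ n - 2 * t + 1) :
    n.choose k ≤ (n - 2 * t).choose k +
      2 * ∑ i ∈ Icc 1 (min t k), (2 * t).choose i * (n - 2 * t).choose (k - i) := by
  set f : ℕ → ℕ := fun i => (2 * t).choose i * (n - 2 * t).choose (k - i)
  set m := min t k
  have split : n.choose k = f 0 + ∑ i ∈ Icc 1 m, f i + ∑ i ∈ Icc (m + 1) k, f i := by
    rw [← Nat.add_sub_cancel' hn, Nat.add_choose_eq_sum_range, range_eq_Ico,
      sum_eq_sum_Ico_succ_bot k.succ_pos, ← sum_Ico_consecutive f (by omega : 1 ≤ m + 1)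
      (by omega : m + 1 ≤ k + 1), Ico_add_one_right_eq_Icc, Ico_add_one_right_eq_Icc,
      add_assoc]
  have tail : ∑ i ∈ Icc (m + 1) k, f i ≤ ∑ i ∈ Icc 1 m, f i := by
    rcases le_total t k with htk | hkt
    · rw [show m = t from min_eq_left htk]
      exact sum_Icc_succ_le_sum_Icc_one_choose_two_mul_mul_choose t _ k hk hkn
    · rw [show m = k from min_eq_right hkt, Icc_eq_empty (by omega), sum_empty]
      exact Nat.zero_le _
  have f_zero : f 0 = (n - 2 * t).choose k := by simp [f]
  change _ ≤ _ + 2 * ∑ i ∈ Icc 1 m, f i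
  omega

theorem stmt_8_general (n k y : ℕ) (hk1 : 1 ≤ k) (hye : Even y)
    (hky : k ≤ y) (hyn : y ≤ n) (h1 : Real.log 2 / 2 ≤ (y : ℝ) * k / n)
    (h2 : (y : ℝ) * k / n < 1) :
    (Real.sqrt 2 - 1) / (4 * Real.sqrt 2) ≤
      ∑ i ∈ Finset.Icc 1 (min (y / 2) k), pcoup n k y i := by
  obtain ⟨t, rfl⟩ := hye
  rw [← two_mul] at hky hyn h1 h2 ⊢
  have hn : (0 : ℝ) < n := by exact_mod_cast (by omega : 0 < n)
  have hykn : 2 * t * k < n := by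
    rw [div_lt_one hn] at h2
    exact_mod_cast h2
  have hk : 2 * (k - 1) ≤ n - 2 * t + 1 := by
    obtain ⟨j, rfl⟩ := Nat.exists_eq_add_of_le' hk1
    have : 2 * j + 2 * t ≤ 2 * t * (j + 1) := by nlinarith [show 1 ≤ t by omega]
    omega
  set S := ∑ i ∈ Icc 1 (min t k), (2 * t).choose i * (n - 2 * t).choose (k - i)
  have hC : (0 : ℝ) < n.choose k := by exact_mod_cast Nat.choose_pos (hky.trans hyn)
  have hCqS : (n.choose k : ℝ) ≤ (n - 2 * t).choose k + 2 * S := by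
    exact_mod_cast choose_le_choose_sub_add_two_mul_sum_Icc hyn hky hk
  have hqC : ((n - 2 * t).choose k : ℝ) * Real.sqrt 2 ≤ n.choose k :=
    choose_sub_mul_sqrt_two_le hyn (by exact_mod_cast h1)
  have hsum : ∑ i ∈ Icc 1 (min (2 * t / 2) k), pcoup n k (2 * t) i = S / (2 * n.choose k) := by
    rw [Nat.mul_div_cancel_left t two_pos]
    simp only [pcoup, S, ← sum_div]
    push_cast
    rfl
  rw [hsum, div_le_div_iff₀ (by positivity) (by positivity)]
  nlinarith [Real.mul_self_sqrt (zero_le_two : (0 : ℝ) ≤ 2), Real.sqrt_nonneg 2]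

/-- Lemma `lemma general`, part 4: if `k ≤ y ≤ n` and `(log 2)/2 ≤ yk/n < 1`, the probability
of selecting between `1` and `min{y/2, k}` mismatched coordinates is at least `(√2−1)/(4√2)`. -/
theorem stmt_8 (n k y : ℕ) (hk1 : 1 ≤ k) (hkn : k ≤ n) (hye : Even y) (hy2 : 2 ≤ y)
    (hky : k ≤ y) (hyn : y ≤ n) (h1 : Real.log 2 / 2 ≤ (y : ℝ) * k / n)
    (h2 : (y : ℝ) * k / n < 1) :
    (Real.sqrt 2 - 1) / (4 * Real.sqrt 2) ≤
      ∑ i ∈ Finset.Icc 1 (min (y / 2) k), pcoup n k y i :=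
  stmt_8_general n k y hk1 hye hky hyn h1 h2
end

section
/- Let n, k, y be integers with 1 ≤ k ≤ n, y even, 2 ≤ y, k ≤ y ≤ n, and yk/n < (log 2)/2 (log denoting natural logarithm). Then the probability that a lazy step selects between 1 and min{y/2, k} (inclusive) of the y mismatched coordinates is at least yk/(8n); that is, ∑_{i : 1 ≤ i ≤ min(y/2, k)} binom(y,i)·binom(n−y, k−i) / (2·binom(n,k)) ≥ yk/(8n). -/
open Finset

theorem pow_le_four_mul_pow_sub (n s m : ℕ) (h : 4 * m * s ≤ 3 * n) :
    n ^ m ≤ 4 * (n - s) ^ m := by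
  rcases Nat.eq_zero_or_pos m with rfl | hm
  · simp
  rcases Nat.eq_zero_or_pos n with rfl | hn
  · simp [Nat.zero_pow hm]
  have hsn : s ≤ n := by nlinarith
  have hnR : (0 : ℝ) < n := by exact_mod_cast hn
  have hms : (m : ℝ) * (s / n) ≤ 3 / 4 := by
    have h' : (4 * m * s : ℝ) ≤ 3 * n := by exact_mod_cast h
    rw [← mul_div_assoc, div_le_iff₀ hnR]
    linarith
  have hs1 : (s : ℝ) / n ≤ 1 := by
    rw [div_le_one hnR]; exact_mod_cast hsn
  have bernoulli : 1 + m * (-(s / n : ℝ)) ≤ (1 + -(s / n : ℝ)) ^ m :=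
    one_add_mul_le_pow (by linarith) m
  have hsub : ((n - s : ℕ) : ℝ) = n * (1 + -(s / n : ℝ)) := by
    rw [Nat.cast_sub hsn]; field_simp; ring
  have : (n : ℝ) ^ m ≤ 4 * ((n - s : ℕ) : ℝ) ^ m :=
    calc (n : ℝ) ^ m = (n : ℝ) ^ m * 1 := (mul_one _).symm
      _ ≤ (n : ℝ) ^ m * (4 * (1 + -(s / n : ℝ)) ^ m) := by gcongr; linarith
      _ = 4 * ((n - s : ℕ) : ℝ) ^ m := by rw [hsub, mul_pow]; ring
  exact_mod_cast this

theorem choose_le_four_mul_choose_sub (n y m : ℕ) (h : 4 * m * (y + m) ≤ 3 * n) :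
    n.choose m ≤ 4 * (n - y).choose m := by
  refine Nat.le_of_mul_le_mul_left ?_ (Nat.factorial_pos m)
  calc m.factorial * n.choose m = n.descFactorial m :=
        (Nat.descFactorial_eq_factorial_mul_choose n m).symm
    _ ≤ n ^ m := Nat.descFactorial_le_pow n m
    _ ≤ 4 * (n - (y + m)) ^ m := pow_le_four_mul_pow_sub n (y + m) m h
    _ ≤ 4 * (n - y + 1 - m) ^ m := Nat.mul_le_mul_left 4 (Nat.pow_le_pow_left (by omega) m)
    _ ≤ 4 * (n - y).descFactorial m :=
        Nat.mul_le_mul_left 4 (Nat.pow_sub_le_descFactorial (n - y) m)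
    _ = m.factorial * (4 * (n - y).choose m) := by
      rw [Nat.descFactorial_eq_factorial_mul_choose]; ring

theorem succ_mul_choose_succ_le (n y m : ℕ) (h : 4 * m * (y + m) ≤ 3 * n) :
    (m + 1) * n.choose (m + 1) ≤ 4 * n * (n - y).choose m :=
  calc (m + 1) * n.choose (m + 1) = n.choose m * (n - m) := by
        rw [mul_comm, Nat.choose_succ_right_eq]
    _ ≤ 4 * (n - y).choose m * n := by
        gcongr
        · exact choose_le_four_mul_choose_sub n y m h
        · exact Nat.sub_le n m
    _ = 4 * n * (n - y).choose m := by ring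

theorem mul_div_le_pcoup_one (n y m : ℕ) (hm : m + 1 ≤ n) (h : 4 * m * (y + m) ≤ 3 * n) :
    (y : ℝ) * (m + 1 : ℕ) / (8 * n) ≤ pcoup n (m + 1) y 1 := by
  have hchoose : (0 : ℝ) < n.choose (m + 1) := by exact_mod_cast Nat.choose_pos hm
  have hn : (0 : ℝ) < n := by exact_mod_cast (by omega : 0 < n)
  have key :
      (((m + 1) * n.choose (m + 1) : ℕ) : ℝ) ≤ ((4 * n * (n - y).choose m : ℕ) : ℝ) :=
    mod_cast succ_mul_choose_succ_le n y m h
  unfold pcoup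
  rw [Nat.choose_one_right, Nat.add_sub_cancel, div_le_div_iff₀ (by positivity) (by positivity)]
  push_cast at key ⊢
  have hy : (0 : ℝ) ≤ y := y.cast_nonneg
  nlinarith [mul_le_mul_of_nonneg_left key hy]

theorem stmt_9_general (n k y : ℕ) (hk1 : 1 ≤ k) (hkn : k ≤ n) (hy2 : 2 ≤ y)
    (hky : k ≤ y) (h1 : (y : ℝ) * k / n < Real.log 2 / 2) :
    (y : ℝ) * k / (8 * n) ≤ ∑ i ∈ Finset.Icc 1 (min (y / 2) k), pcoup n k y i := by
  obtain ⟨m, rfl⟩ : ∃ m, k = m + 1 := ⟨k - 1, by omega⟩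
  have hnR : (0 : ℝ) < n := by exact_mod_cast (by omega : 0 < n)
  have hyk : 8 * (y * (m + 1)) ≤ 3 * n := by
    have hlog : Real.log 2 < 3 / 4 := by linarith [Real.log_two_lt_d9]
    rw [div_lt_iff₀ hnR] at h1
    have : (8 * (y * (m + 1)) : ℝ) ≤ 3 * n := by push_cast at h1; nlinarith
    exact_mod_cast this
  have hm : 4 * m * (y + m) ≤ 3 * n := by nlinarith
  calc (y : ℝ) * (m + 1 : ℕ) / (8 * n)
      ≤ pcoup n (m + 1) y 1 := mul_div_le_pcoup_one n y m hkn hm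
    _ ≤ ∑ i ∈ Icc 1 (min (y / 2) (m + 1)), pcoup n (m + 1) y i :=
      single_le_sum (fun i _ => by unfold pcoup; positivity) (by simp only [mem_Icc]; omega)

/-- Lemma `lemma general`, part 5: if `k ≤ y ≤ n` and `yk/n < (log 2)/2`, the probability of
selecting between `1` and `min{y/2, k}` mismatched coordinates is at least `yk/(8n)`. -/
theorem stmt_9 (n k y : ℕ) (hk1 : 1 ≤ k) (hkn : k ≤ n) (hye : Even y) (hy2 : 2 ≤ y)
    (hky : k ≤ y) (hyn : y ≤ n) (h1 : (y : ℝ) * k / n < Real.log 2 / 2) :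
    (y : ℝ) * k / (8 * n) ≤ ∑ i ∈ Finset.Icc 1 (min (y / 2) k), pcoup n k y i :=
  stmt_9_general n k y hk1 hkn hy2 hky h1
end

section
/- Let n, k, y be integers with 1 ≤ k ≤ n, y even, 2 ≤ y < k, and yk/n ≤ (log 2)/2 (log denoting natural logarithm). Then the probability that a lazy step selects between 1 and y/2 (inclusive) of the y mismatched coordinates is at least yk/(8n); that is, ∑_{i : 1 ≤ i ≤ y/2} binom(y,i)·binom(n−y, k−i) / (2·binom(n,k)) ≥ yk/(8n). -/
/-! Only the term `i = 1` is needed. It equals `y·C(n−y,k−1) / (2·C(n,k))`, and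
`k·C(n,k) = n·C(n−1,k−1)`. Deleting `y − 1` more points from the ground set destroys at most
`(y−1)·C(n−2,k−2) ≤ (yk/n)·C(n−1,k−1)` of the `(k−1)`-subsets, which is at most half of them
because `yk/n ≤ (log 2)/2 < 1/2`. -/

open Finset

namespace Nat

theorem choose_succ_le_choose_pred_add (a m : ℕ) :
    a.choose (m + 1) ≤ (a - 1).choose (m + 1) + (a - 1).choose m := by
  cases a with
  | zero => simp
  | succ b => simp [choose_succ_succ', add_comm]

theorem choose_le_choose_sub_add_mul (a j m : ℕ) :
    a.choose (m + 1) ≤ (a - j).choose (m + 1) + j * (a - 1).choose m := by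
  induction j with
  | zero => simp
  | succ j ih =>
    have hstep := choose_succ_le_choose_pred_add (a - j) m
    have hmono : (a - j - 1).choose m ≤ (a - 1).choose m := choose_le_choose m (by omega)
    rw [Nat.sub_sub] at hstep hmono
    linarith

theorem choose_le_two_mul_choose_sub {a j m : ℕ} (h : 2 * j * (m + 1) ≤ a) :
    a.choose (m + 1) ≤ 2 * (a - j).choose (m + 1) := by
  cases a with
  | zero => simp
  | succ b =>
    have hpascal := add_one_mul_choose_eq b m
    have hsmall : 2 * j * b.choose m ≤ (b + 1).choose (m + 1) := by
      refine Nat.le_of_mul_le_mul_left ?_ b.succ_pos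
      calc (b + 1) * (2 * j * b.choose m) = 2 * j * (m + 1) * (b + 1).choose (m + 1) := by
            rw [mul_left_comm, hpascal]; ring
        _ ≤ (b + 1) * (b + 1).choose (m + 1) := Nat.mul_le_mul_right _ h
    have := choose_le_choose_sub_add_mul (b + 1) j m
    rw [Nat.add_sub_cancel] at this
    linarith

end Nat

theorem pcoup_nonneg (n k y i : ℕ) : 0 ≤ pcoup n k y i := by
  unfold pcoup; positivity

theorem mul_div_le_pcoup_one_s13 {n k y : ℕ} (hy : 1 ≤ y) (hk : 2 ≤ k) (hdense : 2 * y * k ≤ n) :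
    (y : ℝ) * k / (8 * n) ≤ pcoup n k y 1 := by
  obtain ⟨j, rfl⟩ : ∃ j, y = j + 1 := ⟨y - 1, by omega⟩
  obtain ⟨m, rfl⟩ : ∃ m, k = m + 2 := ⟨k - 2, by omega⟩
  obtain ⟨a, rfl⟩ : ∃ a, n = a + 1 := by
    have : 0 < 2 * (j + 1) * (m + 2) := by positivity
    exact ⟨n - 1, by omega⟩
  have hchoose : a.choose (m + 1) ≤ 2 * (a - j).choose (m + 1) :=
    Nat.choose_le_two_mul_choose_sub (by nlinarith)
  have hpascal : (m + 2) * (a + 1).choose (m + 2) = (a + 1) * a.choose (m + 1) := by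
    rw [Nat.add_one_mul_choose_eq, mul_comm]
  have hpos : 0 < (a + 1).choose (m + 2) := Nat.choose_pos (by nlinarith)
  unfold pcoup
  rw [div_le_div_iff₀ (by positivity) (by positivity)]
  simp only [Nat.choose_one_right, Nat.add_sub_add_right, show m + 2 - 1 = m + 1 by omega]
  exact_mod_cast calc (j + 1) * (m + 2) * (2 * (a + 1).choose (m + 2))
      = 2 * (j + 1) * ((a + 1) * a.choose (m + 1)) := by rw [← hpascal]; ring
    _ ≤ 2 * (j + 1) * ((a + 1) * (2 * (a - j).choose (m + 1))) := by gcongr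
    _ = 4 * ((j + 1) * (a - j).choose (m + 1) * (a + 1)) := by ring
    _ ≤ 8 * ((j + 1) * (a - j).choose (m + 1) * (a + 1)) := Nat.mul_le_mul_right _ (by norm_num)
    _ = (j + 1) * (a - j).choose (m + 1) * (8 * (a + 1)) := by ring

theorem stmt_13_general (n k y : ℕ) (hkn : k ≤ n) (hy2 : 2 ≤ y)
    (hyk : y < k) (h1 : (y : ℝ) * k / n ≤ Real.log 2 / 2) :
    (y : ℝ) * k / (8 * n) ≤ ∑ i ∈ Finset.Icc 1 (y / 2), pcoup n k y i := by
  have hn : (0 : ℝ) < n := by exact_mod_cast (show 0 < n by omega)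
  have hdense : 2 * y * k ≤ n := by
    have : (y : ℝ) * k / n < 1 / 2 := by linarith [Real.log_two_lt_d9]
    rw [div_lt_iff₀ hn] at this
    exact_mod_cast (by linarith : (2 * y * k : ℝ) ≤ n)
  calc _ ≤ pcoup n k y 1 := mul_div_le_pcoup_one_s13 (by omega) (by omega) hdense
    _ ≤ _ := single_le_sum (f := pcoup n k y) (fun i _ => pcoup_nonneg n k y i)
        (mem_Icc.mpr ⟨le_rfl, by omega⟩)

/-- Lemma `lemma general`, part 9: if `y < k` and `yk/n ≤ (log 2)/2`, the probability of
selecting between `1` and `y/2` mismatched coordinates is at least `yk/(8n)`. -/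
theorem stmt_13 (n k y : ℕ) (hk1 : 1 ≤ k) (hkn : k ≤ n) (hye : Even y) (hy2 : 2 ≤ y)
    (hyk : y < k) (h1 : (y : ℝ) * k / n ≤ Real.log 2 / 2) :
    (y : ℝ) * k / (8 * n) ≤ ∑ i ∈ Finset.Icc 1 (y / 2), pcoup n k y i :=
  stmt_13_general n k y hkn hy2 hyk h1
end

section
/- Let n ≥ 2 be an even integer. For every integer j with 0 ≤ j ≤ n, the alternating hypergeometric sum S(j) = ∑_{a=0}^{j} (−1)^a · binom(j,a)·binom(n−j, n/2 − a) (a rational number, with binom(a,b) = 0 out of range) satisfies: S(j) = 0 if j is odd, and S(2i) = (−1)^i · binom(n/2, i) · binom(n, n/2) / binom(n, 2i) if j = 2i is even. Equivalently, the j-th Krawtchouck polynomial K^n_j(k) = S(j)/binom(n, n/2) evaluated at k = n/2 equals 0 for odd j and (−1)^i·binom(n/2,i)/binom(n,2i) for j = 2i. -/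
open Finset Polynomial

private lemma coeff_one_sub_X_pow (j a : ℕ) :
    ((1 - X : ℚ[X]) ^ j).coeff a = (-1) ^ a * (j.choose a : ℚ) := by
  have h : (1 - X : ℚ[X]) = C (-1) * (X + C (-1)) := by
    simp only [map_neg, map_one]; ring
  rw [h, mul_pow, ← C_pow, coeff_C_mul, coeff_X_add_C_pow]
  rcases le_or_gt a j with hle | hlt
  · rw [← mul_assoc, ← pow_add]
    have : j + (j - a) = a + 2 * (j - a) := by omega
    rw [this, pow_add, pow_mul]
    norm_num
  · rw [Nat.choose_eq_zero_of_lt hlt]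
    simp

private noncomputable def Pm (m j : ℕ) : ℚ[X] := (1 - X) ^ j * (1 + X) ^ (2 * m - j)

private lemma coeff_Pm (m j r : ℕ) :
    (Pm m j).coeff r
      = ∑ a ∈ range (r + 1),
          (-1) ^ a * ((j.choose a : ℚ) * ((2 * m - j).choose (r - a) : ℚ)) := by
  rw [Pm, coeff_mul, Finset.Nat.sum_antidiagonal_eq_sum_range_succ_mk]
  refine Finset.sum_congr rfl fun a _ => ?_
  rw [coeff_one_sub_X_pow, coeff_one_add_X_pow, mul_assoc]

private lemma reflect_one_sub_X : reflect 1 (1 - X : ℚ[X]) = X - 1 := by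
  have h : (1 - X : ℚ[X]) = C 1 * X ^ 0 + C (-1) * X ^ 1 := by
    simp only [map_one, map_neg, pow_zero, pow_one]; ring
  rw [h, reflect_add, reflect_C_mul_X_pow, reflect_C_mul_X_pow]
  simp [revAt_le]
  ring

private lemma reflect_one_add_X : reflect 1 (1 + X : ℚ[X]) = X + 1 := by
  have h : (1 + X : ℚ[X]) = C 1 * X ^ 0 + C 1 * X ^ 1 := by
    simp only [map_one, pow_zero, pow_one]; ring
  rw [h, reflect_add, reflect_C_mul_X_pow, reflect_C_mul_X_pow]
  simp [revAt_le]

private lemma natDegree_one_sub_X : (1 - X : ℚ[X]).natDegree ≤ 1 := by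
  refine (natDegree_sub_le _ _).trans ?_
  simp

private lemma natDegree_one_add_X : (1 + X : ℚ[X]).natDegree ≤ 1 := by
  refine (natDegree_add_le _ _).trans ?_
  simp

private lemma reflect_pow_aux (p : ℚ[X]) (hp : p.natDegree ≤ 1) (j : ℕ) :
    reflect j (p ^ j) = (reflect 1 p) ^ j := by
  induction j with
  | zero => simp
  | succ k ih =>
      have hk : (p ^ k).natDegree ≤ k := natDegree_pow_le.trans (by nlinarith)
      rw [pow_succ, reflect_mul _ _ hk hp, ih, pow_succ]

private lemma reflect_Pm' (j t : ℕ) :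
    reflect (j + t) ((1 - X : ℚ[X]) ^ j * (1 + X) ^ t)
      = C ((-1 : ℚ) ^ j) * ((1 - X) ^ j * (1 + X) ^ t) := by
  have hd1 : ((1 - X : ℚ[X]) ^ j).natDegree ≤ j :=
    natDegree_pow_le.trans (by have := natDegree_one_sub_X; nlinarith)
  have hd2 : ((1 + X : ℚ[X]) ^ t).natDegree ≤ t :=
    natDegree_pow_le.trans (by have := natDegree_one_add_X; nlinarith)
  rw [reflect_mul _ _ hd1 hd2, reflect_pow_aux _ natDegree_one_sub_X,
    reflect_pow_aux _ natDegree_one_add_X, reflect_one_sub_X, reflect_one_add_X]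
  have hx : (X - 1 : ℚ[X]) = C (-1) * (1 - X) := by
    simp only [map_neg, map_one]; ring
  rw [hx, mul_pow, ← C_pow]
  ring

private lemma reflect_Pm (m j : ℕ) (h : j ≤ 2 * m) :
    reflect (2 * m) (Pm m j) = C ((-1 : ℚ) ^ j) * Pm m j := by
  obtain ⟨t, ht⟩ : ∃ t, 2 * m = j + t := ⟨2 * m - j, by omega⟩
  rw [Pm, ht, Nat.add_sub_cancel_left]
  exact reflect_Pm' j t

private lemma Pm_coeff_symm (m j r : ℕ) (h : j ≤ 2 * m) (hr : r ≤ 2 * m) :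
    (Pm m j).coeff r = (-1 : ℚ) ^ j * (Pm m j).coeff (2 * m - r) := by
  have h1 := coeff_reflect (2 * m) (Pm m j) (2 * m - r)
  rw [reflect_Pm m j h, coeff_C_mul, revAt_le (by omega), Nat.sub_sub_self hr] at h1
  rw [← h1]

private lemma deriv_one_sub (j : ℕ) :
    (1 - X : ℚ[X]) * derivative ((1 - X : ℚ[X]) ^ j) = -(C (j : ℚ)) * (1 - X) ^ j := by
  cases j with
  | zero => simp
  | succ k =>
      rw [derivative_pow]
      have hd : derivative (1 - X : ℚ[X]) = -1 := by simp
      rw [hd, Nat.add_sub_cancel]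
      push_cast [C_eq_natCast]
      ring

private lemma deriv_one_add (j : ℕ) :
    (1 + X : ℚ[X]) * derivative ((1 + X : ℚ[X]) ^ j) = C (j : ℚ) * (1 + X) ^ j := by
  cases j with
  | zero => simp
  | succ k =>
      rw [derivative_pow]
      have hd : derivative (1 + X : ℚ[X]) = 1 := by simp
      rw [hd, Nat.add_sub_cancel]
      push_cast [C_eq_natCast]
      ring

private lemma ode_Pm (m j : ℕ) :
    (1 - X) * (1 + X) * derivative (Pm m j)
      = (C (((2 * m - j : ℕ) : ℚ)) * (1 - X) - C ((j : ℚ)) * (1 + X)) * Pm m j := by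
  rw [Pm, derivative_mul]
  have h1 := deriv_one_sub j
  have h2 := deriv_one_add (2 * m - j)
  linear_combination ((1 + X : ℚ[X]) ^ (2 * m - j) * (1 + X)) * h1
    + ((1 - X : ℚ[X]) ^ j * (1 - X)) * h2

private lemma coeff_one_add_X_mul (p : ℚ[X]) (r : ℕ) :
    ((1 + X) * p).coeff (r + 1) = p.coeff (r + 1) + p.coeff r := by
  rw [add_mul, one_mul, coeff_add, coeff_X_mul]

private lemma coeff_one_sub_X_mul (p : ℚ[X]) (r : ℕ) :
    ((1 - X) * p).coeff (r + 1) = p.coeff (r + 1) - p.coeff r := by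
  rw [sub_mul, one_mul, coeff_sub, coeff_X_mul]

private lemma relB (m j : ℕ) (hm : 1 ≤ m) (hj : j ≤ 2 * m) :
    ((m:ℚ)+1) * (Pm m j).coeff (m+1) - ((m:ℚ)-1) * (Pm m j).coeff (m-1)
      = (2*(m:ℚ) - 2*(j:ℚ)) * (Pm m j).coeff m - 2*(m:ℚ) * (Pm m j).coeff (m-1) := by
  obtain ⟨M, rfl⟩ : ∃ M, m = M + 1 := ⟨m - 1, by omega⟩
  set P := Pm (M+1) j with hP
  have key := congrArg (fun p => p.coeff (M + 1)) (ode_Pm (M+1) j)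
  rw [mul_assoc, coeff_one_sub_X_mul] at key
  have hQ1 : ((1 + X) * derivative P).coeff (M+1)
      = P.coeff (M+2) * ((M:ℚ)+2) + P.coeff (M+1) * ((M:ℚ)+1) := by
    rw [coeff_one_add_X_mul, coeff_derivative, coeff_derivative]
    push_cast; ring
  have hQ0 : ((1 + X) * derivative P).coeff M
      = P.coeff (M+1) * ((M:ℚ)+1) + P.coeff M * (M:ℚ) := by
    cases M with
    | zero => simp [mul_coeff_zero, coeff_derivative]
    | succ K =>
        rw [coeff_one_add_X_mul, coeff_derivative, coeff_derivative]
        push_cast; ring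
  have hR : ((C (((2 * (M+1) - j : ℕ) : ℚ)) * (1 - X) - C ((j : ℚ)) * (1 + X)) * P).coeff (M+1)
      = ((2 * (M+1) - j : ℕ) : ℚ) * (P.coeff (M+1) - P.coeff M)
        - (j:ℚ) * (P.coeff (M+1) + P.coeff M) := by
    rw [sub_mul, coeff_sub, mul_assoc, mul_assoc, coeff_C_mul, coeff_C_mul,
      coeff_one_sub_X_mul, coeff_one_add_X_mul]
  rw [hQ1, hQ0, hR] at key
  have hcast : ((2 * (M+1) - j : ℕ) : ℚ) = 2 * ((M:ℚ)+1) - (j:ℚ) := by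
    rw [Nat.cast_sub hj]; push_cast; ring
  rw [hcast] at key
  have hsub : M + 1 - 1 = M := rfl
  rw [hsub]
  push_cast
  linarith [key]

private lemma relCross (m j : ℕ) (hm : 1 ≤ m) (hj : j + 1 ≤ 2 * m) :
    (Pm m (j+1)).coeff m + (Pm m (j+1)).coeff (m-1)
      = (Pm m j).coeff m - (Pm m j).coeff (m-1) := by
  have key : (1 + X) * Pm m (j+1) = (1 - X) * Pm m j := by
    rw [Pm, Pm, pow_succ]
    have h2 : 2 * m - j = (2 * m - (j+1)) + 1 := by omega
    rw [h2, pow_succ]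
    ring
  obtain ⟨M, rfl⟩ : ∃ M, m = M + 1 := ⟨m - 1, by omega⟩
  have := congrArg (fun p => p.coeff (M + 1)) key
  rw [coeff_one_add_X_mul, coeff_one_sub_X_mul] at this
  simpa using this

private lemma oddZero (m j : ℕ) (hj : j ≤ 2 * m) (hodd : Odd j) :
    (Pm m j).coeff m = 0 := by
  have h := Pm_coeff_symm m j m hj (by omega)
  have h2 : 2 * m - m = m := by omega
  rw [h2, hodd.neg_one_pow] at h
  linarith

private lemma symmEven (m j : ℕ) (hm : 1 ≤ m) (hj : j ≤ 2 * m) (heven : Even j) :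
    (Pm m j).coeff (m+1) = (Pm m j).coeff (m-1) := by
  have h := Pm_coeff_symm m j (m+1) hj (by omega)
  have h2 : 2 * m - (m+1) = m - 1 := by omega
  rw [h2, heven.neg_one_pow, one_mul] at h
  exact h

private lemma evenRec (m i : ℕ) (hm : 1 ≤ m) (hi : i + 1 ≤ m) :
    (2*(m:ℚ) - 2*(i:ℚ) - 1) * (Pm m (2*i+2)).coeff m
      = -(2*(i:ℚ)+1) * (Pm m (2*i)).coeff m := by
  have h0 : 2*i ≤ 2*m := by omega
  have h1 : 2*i+1 ≤ 2*m := by omega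
  have h2 : 2*i+2 ≤ 2*m := by omega
  have hB0 := relB m (2*i) hm h0
  have hS0 := symmEven m (2*i) hm h0 ⟨i, by ring⟩
  have hI : (2*(m:ℚ)+2) * (Pm m (2*i)).coeff (m-1)
      = (2*(m:ℚ) - 4*(i:ℚ)) * (Pm m (2*i)).coeff m := by
    rw [hS0] at hB0
    push_cast at hB0 ⊢
    linarith
  have hII : (Pm m (2*i+1)).coeff m = 0 := oddZero m (2*i+1) h1 ⟨i, by ring⟩
  have hIII := relCross m (2*i) hm h1
  have hIV : (Pm m (2*i+2)).coeff m + (Pm m (2*i+2)).coeff (m-1)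
      = (Pm m (2*i+1)).coeff m - (Pm m (2*i+1)).coeff (m-1) := by
    have := relCross m (2*i+1) hm h2
    simpa using this
  have hB2 := relB m (2*i+2) hm h2
  have hS2 := symmEven m (2*i+2) hm h2 ⟨i+1, by ring⟩
  have hV : (2*(m:ℚ)+2) * (Pm m (2*i+2)).coeff (m-1)
      = (2*(m:ℚ) - 4*(i:ℚ) - 4) * (Pm m (2*i+2)).coeff m := by
    rw [hS2] at hB2
    push_cast at hB2 ⊢
    linarith
  rw [hII] at hIII hIV
  linear_combination ((m:ℚ)+1) * hIV - (1/2) * hV - ((m:ℚ)+1) * hIII + (1/2) * hI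

private lemma chooseCast (n k : ℕ) (h : k + 1 ≤ n) :
    ((n.choose (k+1) : ℚ)) * ((k:ℚ)+1) = (n.choose k : ℚ) * ((n:ℚ) - (k:ℚ)) := by
  have := Nat.choose_succ_right_eq n k
  have hc : ((n - k : ℕ) : ℚ) = (n:ℚ) - (k:ℚ) := by
    rw [Nat.cast_sub (by omega)]
  calc ((n.choose (k+1) : ℚ)) * ((k:ℚ)+1)
      = ((n.choose (k+1) * (k+1) : ℕ) : ℚ) := by push_cast; ring
    _ = ((n.choose k * (n - k) : ℕ) : ℚ) := by rw [this]
    _ = (n.choose k : ℚ) * ((n:ℚ) - (k:ℚ)) := by push_cast [Nat.cast_sub (show k ≤ n by omega)]; ring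

private lemma evenVal (m : ℕ) (hm : 1 ≤ m) :
    ∀ i, i ≤ m → (Pm m (2*i)).coeff m
      = (-1 : ℚ) ^ i * ((m.choose i : ℚ)) * (((2*m).choose m : ℚ)) / (((2*m).choose (2*i) : ℚ)) := by
  intro i
  induction i with
  | zero =>
      intro _
      simp [Pm, coeff_one_add_X_pow]
  | succ i ih =>
      intro hi1
      have hi : i ≤ m := by omega
      have hrec := evenRec m i hm hi1
      rw [ih hi] at hrec
      have hne1 : (2*(m:ℚ) - 2*(i:ℚ) - 1) ≠ 0 := by
        have : (i:ℚ) + 1 ≤ (m:ℚ) := by exact_mod_cast hi1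
        nlinarith
      have hc0 : (((2*m).choose (2*i) : ℚ)) ≠ 0 := by
        exact_mod_cast (Nat.choose_pos (by omega : 2*i ≤ 2*m)).ne'
      have hc2 : (((2*m).choose (2*i+2) : ℚ)) ≠ 0 := by
        exact_mod_cast (Nat.choose_pos (by omega : 2*i+2 ≤ 2*m)).ne'
      -- choose identities
      have e1 := chooseCast m i (by omega)
      have e2 := chooseCast (2*m) (2*i) (by omega)
      have e3 : (((2*m).choose (2*i+2) : ℚ)) * ((2*(i:ℚ)+1)+1)
          = ((2*m).choose (2*i+1) : ℚ) * (2*(m:ℚ) - (2*(i:ℚ)+1)) := by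
        have := chooseCast (2*m) (2*i+1) (by omega)
        push_cast at this ⊢
        linarith
      have e2' : (((2*m).choose (2*i+1) : ℚ)) * (2*(i:ℚ)+1)
          = ((2*m).choose (2*i) : ℚ) * (2*(m:ℚ) - 2*(i:ℚ)) := by
        push_cast at e2 ⊢
        linarith
      -- key binomial identity (cross-multiplied)
      have hfac : ((2*(i:ℚ)+2)*(2*(i:ℚ)+1)) ≠ 0 := by positivity
      have G : (2*(i:ℚ)+1) * (m.choose i : ℚ) * ((2*m).choose (2*i+2) : ℚ)
          = (2*(m:ℚ)-2*(i:ℚ)-1) * (m.choose (i+1) : ℚ) * ((2*m).choose (2*i) : ℚ) := by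
        refine mul_left_cancel₀ hfac ?_
        linear_combination
          ((2*(i:ℚ)+1)^2 * (m.choose i : ℚ)) * e3
          + ((2*(i:ℚ)+1) * (2*(m:ℚ)-2*(i:ℚ)-1) * (m.choose i : ℚ)) * e2'
          - (2 * (2*(i:ℚ)+1) * (2*(m:ℚ)-2*(i:ℚ)-1) * (((2*m).choose (2*i) : ℚ))) * e1
      have key : (2*(m:ℚ) - 2*(i:ℚ) - 1)
            * ((-1 : ℚ) ^ (i+1) * ((m.choose (i+1) : ℚ)) * (((2*m).choose m : ℚ))
              / (((2*m).choose (2*i+2) : ℚ)))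
          = -(2*(i:ℚ)+1) * ((-1 : ℚ) ^ i * ((m.choose i : ℚ)) * (((2*m).choose m : ℚ))
              / (((2*m).choose (2*i) : ℚ))) := by
        field_simp
        linear_combination ((-1:ℚ)^i * (((2*m).choose m : ℚ))) * G
      have h2i : 2*(i+1) = 2*i+2 := by ring
      rw [h2i]
      exact mul_left_cancel₀ hne1 (hrec.trans key.symm)

private lemma sum_eq (m j : ℕ) (hj : j ≤ 2 * m) :
    (∑ a ∈ Finset.range (j + 1), (-1 : ℚ) ^ a *
        (if a ≤ m then ((j.choose a * (2 * m - j).choose (m - a) : ℕ) : ℚ) else 0))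
      = (Pm m j).coeff m := by
  set F : ℕ → ℚ := fun a => (-1 : ℚ) ^ a *
      (if a ≤ m then ((j.choose a * (2 * m - j).choose (m - a) : ℕ) : ℚ) else 0) with hF
  have h1 : (∑ a ∈ Finset.range (j + 1), F a) = ∑ a ∈ Finset.range (j + m + 1), F a := by
    refine Finset.sum_subset (Finset.range_subset_range.mpr (by omega)) ?_
    intro a _ ha
    have haj : j < a := by simpa [Nat.lt_succ_iff] using ha
    simp [hF, Nat.choose_eq_zero_of_lt haj]
  have h2 : (Pm m j).coeff m = ∑ a ∈ Finset.range (m + 1), F a := by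
    rw [coeff_Pm]
    refine Finset.sum_congr rfl fun a ha => ?_
    have ham : a ≤ m := by simpa [Nat.lt_succ_iff] using ha
    simp [hF, ham]
  have h3 : (∑ a ∈ Finset.range (m + 1), F a) = ∑ a ∈ Finset.range (j + m + 1), F a := by
    refine Finset.sum_subset (Finset.range_subset_range.mpr (by omega)) ?_
    intro a _ ha
    have ham : m < a := by simpa [Nat.lt_succ_iff] using ha
    simp [hF, Nat.not_le.mpr ham]
  rw [h1, h2, h3]

/-- Krawtchouck values at `k = n/2`: the alternating hypergeometric sum
`S(j) = ∑_{a=0}^{j} (−1)^a · binom(j,a)·binom(n−j, n/2 − a)` (with the convention that the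
binomial vanishes when `n/2 − a < 0`) is `0` for odd `j` and equals
`(−1)^i · binom(n/2, i) · binom(n, n/2) / binom(n, 2i)` for `j = 2i`. -/
theorem stmt_15 (n : ℕ) (hn : 2 ≤ n) (hne : Even n) (j : ℕ) (hj : j ≤ n) :
    (Odd j →
      (∑ a ∈ Finset.range (j + 1), (-1 : ℚ) ^ a *
          (if a ≤ n / 2 then ((j.choose a * (n - j).choose (n / 2 - a) : ℕ) : ℚ) else 0)) = 0) ∧
    (∀ i : ℕ, j = 2 * i →
      (∑ a ∈ Finset.range (j + 1), (-1 : ℚ) ^ a *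
          (if a ≤ n / 2 then ((j.choose a * (n - j).choose (n / 2 - a) : ℕ) : ℚ) else 0))
        = (-1 : ℚ) ^ i * ((n / 2).choose i : ℚ) * (n.choose (n / 2) : ℚ)
            / (n.choose (2 * i) : ℚ)) := by
  obtain ⟨m, rfl⟩ : ∃ m, n = 2 * m := by
    obtain ⟨k, hk⟩ := hne; exact ⟨k, by omega⟩
  have hm : 1 ≤ m := by omega
  have hd : 2 * m / 2 = m := by omega
  rw [hd]
  constructor
  · intro hodd
    rw [sum_eq m j hj]
    exact oddZero m j hj hodd
  · intro i hji
    subst hji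
    have hi : i ≤ m := by omega
    rw [sum_eq m (2 * i) hj]
    exact evenVal m hm i hi
end
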